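/- arXiv:1412.6958 — 2 statements merged into one kernel-verified Lean document; each statement's English description precedes it below -/
import Mathlib

section
/- Let (G,p) be a framework with G a triangulated Laman graph and p ∈ P_G. Then the independent partition for (G,p) does not depend on the choice of Henneberg sequence of G: any two Henneberg sequences of G produce the same partition of the edge set E by the recursive construction. -/
open scoped BigOperators

noncomputable section

/-- Points in the Euclidean plane. -/
abbrev Pt : Type := EuclideanSpace ℝ (Fin 2)

/-- The flattened space of planar configurations indexed by `ι`
(two real coordinates for each vertex). -/
abbrev Conf (ι : Type*) : Type _ := EuclideanSpace ℝ (ι × Fin 2)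

/-- The position of agent `i` in the configuration `p`. -/
def pt {ι : Type*} (p : Conf ι) (i : ι) : Pt := WithLp.toLp 2 (fun c => p (i, c))

/-- The sub-configuration of `p` on the vertices in `S`. -/
def restr {ι : Type*} (S : Set ι) (p : Conf ι) : Conf ↥S := WithLp.toLp 2 (fun ic : ↥S × Fin 2 => p ((ic.1 : ι), ic.2))

/-- The configuration space `P_G`: embeddings of the vertex set in the plane for which
adjacent vertices have distinct positions. -/
def configSpace {ι : Type*} (G : SimpleGraph ι) : Set (Conf ι) :=
  {p | ∀ i j : ι, G.Adj i j → pt p i ≠ pt p j}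

/-- A Henneberg sequence for a triangulated Laman graph `G`, encoded by the order
`ord` in which the vertices appear, and for every step `l ≥ 2` the two earlier steps
`par1 l`, `par2 l`, whose (adjacent) vertices the new vertex `ord l` is joined to.
The edges of `G` are exactly the initial edge together with the edges created at
each step. -/
structure Henneberg {ι : Type*} (G : SimpleGraph ι) : Type _ where
  two_le : 2 ≤ Nat.card ι
  ord : Fin (Nat.card ι) ≃ ι
  par1 : Fin (Nat.card ι) → Fin (Nat.card ι)
  par2 : Fin (Nat.card ι) → Fin (Nat.card ι)
  par1_lt : ∀ l : Fin (Nat.card ι), 2 ≤ (l : ℕ) → par1 l < l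
  par2_lt : ∀ l : Fin (Nat.card ι), 2 ≤ (l : ℕ) → par2 l < l
  par_ne : ∀ l : Fin (Nat.card ι), 2 ≤ (l : ℕ) → par1 l ≠ par2 l
  par_adj : ∀ l : Fin (Nat.card ι), 2 ≤ (l : ℕ) → G.Adj (ord (par1 l)) (ord (par2 l))
  edge_iff : ∀ i j : ι, G.Adj i j ↔
    (s(i, j) = s(ord ⟨0, by omega⟩, ord ⟨1, by omega⟩) ∨
      ∃ l : Fin (Nat.card ι), 2 ≤ (l : ℕ) ∧
        (s(i, j) = s(ord (par1 l), ord l) ∨ s(i, j) = s(ord (par2 l), ord l)))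

/-- A graph is a triangulated Laman graph if it is (essentially) a single vertex, or
it can be built by a Henneberg sequence in which each new vertex is joined to the two
endpoints of an existing edge. -/
def IsTriangulatedLaman {ι : Type*} (G : SimpleGraph ι) : Prop :=
  Nat.card ι ≤ 1 ∨ Nonempty (Henneberg G)

open Classical in
/-- The potential `Φ` induced by `G`, with control laws `f i j = u_{ij}(⬝, d̄_{ij})`:
`Φ(p) = Σ_{(i,j) ∈ E} ∫_1^{‖x_i - x_j‖} s u_{ij}(s, d̄_{ij}) ds`
(each edge is counted once; the double sum counts it twice, whence the factor 1/2). -/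
def potential {ι : Type*} [Fintype ι] (G : SimpleGraph ι) (f : ι → ι → ℝ → ℝ)
    (p : Conf ι) : ℝ :=
  (1 / 2) * ∑ i : ι, ∑ j : ι,
    if G.Adj i j then ∫ s in (1 : ℝ)..(dist (pt p i) (pt p j)), s * f i j s else 0

open Classical in
/-- The right-hand side of the formation control system
`ẋ_i = Σ_{j ∈ N_i} u_{ij}(‖x_i - x_j‖, d̄_{ij}) (x_j - x_i)`. -/
def formationField {ι : Type*} [Fintype ι] (G : SimpleGraph ι) (f : ι → ι → ℝ → ℝ)
    (p : Conf ι) : Conf ι :=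
  WithLp.toLp 2 (fun ic : ι × Fin 2 => ∑ j : ι,
    if G.Adj ic.1 j then f ic.1 j (dist (pt p ic.1) (pt p j)) * (p (j, ic.2) - p (ic.1, ic.2))
    else 0)

/-- A monotone attraction/repulsion function: `f` is C¹ on `ℝ_{>0}`,
`d(x f(x))/dx > 0` for `x > 0`, `f` has a unique (positive) zero, and
`∫_x^1 s f(s) ds → -∞` as `x → 0⁺`. -/
structure IsMonoAttRep (f : ℝ → ℝ) : Prop where
  contDiff : ContDiffOn ℝ 1 f (Set.Ioi 0)
  deriv_pos : ∀ x : ℝ, 0 < x → 0 < deriv (fun y => y * f y) x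
  unique_zero : ∃! x : ℝ, 0 < x ∧ f x = 0
  collision : Filter.Tendsto (fun x : ℝ => ∫ s in x..(1 : ℝ), s * f s)
    (nhdsWithin 0 (Set.Ioi 0)) Filter.atBot

/-- 2×2 rotation matrices. -/
def IsRotation (θ : Matrix (Fin 2) (Fin 2) ℝ) : Prop := θ * θ.transpose = 1 ∧ θ.det = 1

/-- The action of `γ = (θ, v) ∈ SE(2)` on configurations: `γ·p = (θ x_1 + v, …, θ x_n + v)`. -/
def se2Act {ι : Type*} (θ : Matrix (Fin 2) (Fin 2) ℝ) (v : Pt) (p : Conf ι) : Conf ι :=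
  WithLp.toLp 2 (fun ic : ι × Fin 2 => θ.mulVec (pt p ic.1) ic.2 + v ic.2)

/-- The SE(2)-orbit `O_p` of a configuration `p`. -/
def se2Orbit {ι : Type*} (p : Conf ι) : Set (Conf ι) :=
  {q | ∃ θ v, IsRotation θ ∧ q = se2Act θ v p}

/-- Rotation by 90 degrees. -/
def rotJ : Matrix (Fin 2) (Fin 2) ℝ := !![0, -1; 1, 0]

/-- The infinitesimal rotation of a configuration. -/
def infRot {ι : Type*} (p : Conf ι) : Conf ι := WithLp.toLp 2 (fun ic : ι × Fin 2 => rotJ.mulVec (pt p ic.1) ic.2)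

/-- The infinitesimal translation in coordinate direction `c`. -/
def transl (ι : Type*) (c : Fin 2) : Conf ι := WithLp.toLp 2 (fun ic : ι × Fin 2 => if ic.2 = c then 1 else 0)

/-- The tangent space at `p` of the SE(2)-orbit `O_p`. -/
def orbitTangent {ι : Type*} (p : Conf ι) : Submodule ℝ (Conf ι) :=
  Submodule.span ℝ {infRot p, transl ι 0, transl ι 1}

/-- The Hessian matrix `H_p = ∂²Φ(p)/∂p²`. -/
def hessianMat {ι : Type*} [Fintype ι] [DecidableEq ι] (Φ : Conf ι → ℝ) (p : Conf ι) :
    Matrix (ι × Fin 2) (ι × Fin 2) ℝ :=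
  Matrix.of fun a b =>
    iteratedFDeriv ℝ 2 Φ p ![EuclideanSpace.single a 1, EuclideanSpace.single b 1]

/-- The Hessian of `Φ` at `p` with respect to the coordinates of the vertices in `S`
(for `Φ` depending only on those coordinates this is the Hessian of the induced
function of the positions of the vertices in `S`). -/
def hessianMatOn {ι : Type*} [Fintype ι] [DecidableEq ι] (Φ : Conf ι → ℝ) (p : Conf ι) (S : Set ι) :
    Matrix (↥S × Fin 2) (↥S × Fin 2) ℝ :=
  Matrix.of fun a b => hessianMat Φ p ((a.1 : ι), a.2) ((b.1 : ι), b.2)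

open Classical in
/-- `N₊(A)`: the number of positive eigenvalues of a real symmetric matrix,
counted with multiplicity. -/
def nPos {m : Type*} [Finite m] (A : Matrix m m ℝ) : ℕ :=
  letI := Fintype.ofFinite m
  letI := Classical.decEq m
  if h : A.IsHermitian then Fintype.card {i // 0 < h.eigenvalues i} else 0

open Classical in
/-- `N₋(A)`: the number of negative eigenvalues of a real symmetric matrix,
counted with multiplicity. -/
def nNeg {m : Type*} [Finite m] (A : Matrix m m ℝ) : ℕ :=
  letI := Fintype.ofFinite m
  letI := Classical.decEq m
  if h : A.IsHermitian then Fintype.card {i // h.eigenvalues i < 0} else 0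

open Classical in
/-- `N₀(A)`: the number of zero eigenvalues of a real symmetric matrix,
counted with multiplicity. -/
def nZero {m : Type*} [Finite m] (A : Matrix m m ℝ) : ℕ :=
  letI := Fintype.ofFinite m
  letI := Classical.decEq m
  if h : A.IsHermitian then Fintype.card {i // h.eigenvalues i = 0} else 0

/-- `Φ` is an equivariant Morse function on `P_G`: it has finitely many critical orbits,
and each critical orbit is nondegenerate (the Hessian has exactly three zero eigenvalues). -/
def IsEquivariantMorse {ι : Type*} [Fintype ι] [DecidableEq ι] (G : SimpleGraph ι)
    (Φ : Conf ι → ℝ) : Prop :=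
  {O : Set (Conf ι) | ∃ p ∈ configSpace G, gradient Φ p = 0 ∧ O = se2Orbit p}.Finite ∧
  ∀ p ∈ configSpace G, gradient Φ p = 0 → nZero (hessianMat Φ p) = 3

/-- `i`, `j`, `k` form a 3-cycle of `G`. -/
def Is3Cycle {ι : Type*} (G : SimpleGraph ι) (i j k : ι) : Prop :=
  G.Adj i j ∧ G.Adj i k ∧ G.Adj j k

/-- A framework `(G, p)` is strongly rigid if every 3-cycle of `G` is embedded by `p`
as a nondegenerate triangle. -/
def StronglyRigid {ι : Type*} (G : SimpleGraph ι) (p : Conf ι) : Prop :=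
  ∀ i j k : ι, Is3Cycle G i j k →
    LinearIndependent ℝ ![pt p j - pt p i, pt p k - pt p i]

/-- The target distances satisfy the strict triangle inequalities associated with `G`. -/
def StrictTriangleIneqs {ι : Type*} (G : SimpleGraph ι) (dbar : ι → ι → ℝ) : Prop :=
  ∀ i j k : ι, Is3Cycle G i j k →
    dbar j k < dbar i j + dbar i k ∧ dbar i k < dbar i j + dbar j k ∧
      dbar i j < dbar i k + dbar j k

/-- A triangulated formation system: a formation control system induced by a
triangulated Laman graph, with target distances satisfying the strict triangle
inequalities, monotone attraction/repulsion control laws vanishing at the target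
distances, and whose potential is an equivariant Morse function. -/
structure IsTriFormation {ι : Type*} [Fintype ι] [DecidableEq ι] (G : SimpleGraph ι)
    (f : ι → ι → ℝ → ℝ) (dbar : ι → ι → ℝ) : Prop where
  laman : IsTriangulatedLaman G
  fsymm : ∀ i j, f i j = f j i
  dsymm : ∀ i j, dbar i j = dbar j i
  dpos : ∀ i j, G.Adj i j → 0 < dbar i j
  mono : ∀ i j, G.Adj i j → IsMonoAttRep (f i j)
  fzero : ∀ i j, G.Adj i j → f i j (dbar i j) = 0
  triangle : StrictTriangleIneqs G dbar
  morse : IsEquivariantMorse G (potential G f)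

/-- The (critical) orbit of `p` is exponentially stable: the Hessian of `Φ` at `p` has
exactly three zero eigenvalues and no negative eigenvalues (all the others positive). -/
def ExpStableAt {ι : Type*} [Fintype ι] [DecidableEq ι] (Φ : Conf ι → ℝ) (p : Conf ι) : Prop :=
  nZero (hessianMat Φ p) = 3 ∧ nNeg (hessianMat Φ p) = 0

/-- Generating relation for the independent partition: at each step `l ≥ 2` of the
Henneberg sequence in which the new vertex is aligned with its two parents, the two
new edges are related to the parent edge. -/
def triGen {ι : Type*} {G : SimpleGraph ι} (H : Henneberg G) (p : Conf ι) :
    Sym2 ι → Sym2 ι → Prop := fun e e' =>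
  ∃ l : Fin (Nat.card ι), 2 ≤ (l : ℕ) ∧
    Collinear ℝ {pt p (H.ord (H.par1 l)), pt p (H.ord (H.par2 l)), pt p (H.ord l)} ∧
    e' = s(H.ord (H.par1 l), H.ord (H.par2 l)) ∧
    (e = s(H.ord (H.par1 l), H.ord l) ∨ e = s(H.ord (H.par2 l), H.ord l))

/-- The independent partition of the edge set of `G` for the framework `(G, p)`,
computed along the Henneberg sequence `H`. -/
def indepPartition {ι : Type*} {G : SimpleGraph ι} (H : Henneberg G) (p : Conf ι) :
    Set (Set (Sym2 ι)) :=
  {C | ∃ e ∈ G.edgeSet, C = {e' | e' ∈ G.edgeSet ∧ Relation.EqvGen (triGen H p) e e'}}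

/-- The set `V_i` of vertices incident to the edges in a class `C`. -/
def classVerts {ι : Type*} (C : Set (Sym2 ι)) : Set ι := {v | ∃ e ∈ C, v ∈ e}

end

/-!
Whether two edges end up in the same class does not involve the sequence at all: it is the
equivalence relation generated by "lying on a common 3-cycle of `G` whose vertices are
collinear". A relation created at a Henneberg step is of this kind, since the new vertex and
its two parents form a 3-cycle. Conversely, in any 3-cycle of `G` the vertex appearing last in
a Henneberg sequence has the other two as its parents, so if the cycle is collinear, that step
relates its three edges.
-/

open Relation

lemma Relation.eqvGen_of_mem_of_rel_of_rel {α : Type*} {r : α → α → Prop} {x y z : α}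
    (hx : r x z) (hy : r y z) {a b : α} (ha : a ∈ ({z, x, y} : Set α))
    (hb : b ∈ ({z, x, y} : Set α)) : EqvGen r a b := by
  have to_z : ∀ c ∈ ({z, x, y} : Set α), EqvGen r c z := by
    rintro c (rfl | rfl | rfl)
    exacts [.refl c, .rel c z hx, .rel c z hy]
  exact .trans a z b (to_z a ha) (.symm b z (to_z b hb))

section

variable {ι : Type*} {G : SimpleGraph ι}

def triangleEdges (i j k : ι) : Set (Sym2 ι) := {s(i, j), s(i, k), s(j, k)}

lemma triangleEdges_swap (i j k : ι) : triangleEdges i k j = triangleEdges i j k := by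
  ext e
  simp only [triangleEdges, Set.mem_insert_iff, Set.mem_singleton_iff, Sym2.eq_swap (a := k)]
  tauto

lemma triangleEdges_rotate (i j k : ι) : triangleEdges j k i = triangleEdges i j k := by
  ext e
  simp only [triangleEdges, Set.mem_insert_iff, Set.mem_singleton_iff,
    Sym2.eq_swap (a := j) (b := i), Sym2.eq_swap (a := k) (b := i)]
  tauto

def OnCollinearTriangle (G : SimpleGraph ι) (p : Conf ι) (e e' : Sym2 ι) : Prop :=
  ∃ i j k : ι, Is3Cycle G i j k ∧ Collinear ℝ {pt p i, pt p j, pt p k} ∧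
    e ∈ triangleEdges i j k ∧ e' ∈ triangleEdges i j k

namespace Henneberg

variable (H : Henneberg G)

lemma eq_par_of_adj_of_lt {x : ι} {l : Fin (Nat.card ι)} (hl : 2 ≤ (l : ℕ))
    (hadj : G.Adj x (H.ord l)) (hlt : H.ord.symm x < l) :
    x = H.ord (H.par1 l) ∨ x = H.ord (H.par2 l) := by
  rcases (H.edge_iff x (H.ord l)).1 hadj with h | ⟨l', hl', h | h⟩ <;>
    simp only [Sym2.eq_iff, H.ord.apply_eq_iff_eq, ← H.ord.symm_apply_eq] at h
  · rcases h with ⟨-, rfl⟩ | ⟨-, rfl⟩ <;> simp at hl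
  · rcases h with ⟨hx, rfl⟩ | ⟨hx, rfl⟩
    · exact .inl (H.ord.symm_apply_eq.1 hx)
    · exact absurd (hx ▸ hlt) (H.par1_lt l' hl').asymm
  · rcases h with ⟨hx, rfl⟩ | ⟨hx, rfl⟩
    · exact .inr (H.ord.symm_apply_eq.1 hx)
    · exact absurd (hx ▸ hlt) (H.par2_lt l' hl').asymm

lemma eqvGen_triGen_of_mem_triangleEdges_par (p : Conf ι) {l : Fin (Nat.card ι)}
    (hl : 2 ≤ (l : ℕ))
    (hcol : Collinear ℝ {pt p (H.ord (H.par1 l)), pt p (H.ord (H.par2 l)), pt p (H.ord l)})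
    {e e' : Sym2 ι} (he : e ∈ triangleEdges (H.ord (H.par1 l)) (H.ord (H.par2 l)) (H.ord l))
    (he' : e' ∈ triangleEdges (H.ord (H.par1 l)) (H.ord (H.par2 l)) (H.ord l)) :
    EqvGen (triGen H p) e e' :=
  eqvGen_of_mem_of_rel_of_rel ⟨l, hl, hcol, rfl, .inl rfl⟩ ⟨l, hl, hcol, rfl, .inr rfl⟩
    he he'

lemma eqvGen_triGen_of_mem_triangleEdges_of_lt (p : Conf ι) {i j k : ι}
    (h3 : Is3Cycle G i j k) (hcol : Collinear ℝ {pt p i, pt p j, pt p k})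
    (hik : H.ord.symm i < H.ord.symm k) (hjk : H.ord.symm j < H.ord.symm k)
    {e e' : Sym2 ι} (he : e ∈ triangleEdges i j k) (he' : e' ∈ triangleEdges i j k) :
    EqvGen (triGen H p) e e' := by
  obtain ⟨hij, hik_adj, hjk_adj⟩ := h3
  obtain ⟨l, rfl⟩ := H.ord.surjective k
  rw [Equiv.symm_apply_apply] at hik hjk
  have hij' : H.ord.symm i ≠ H.ord.symm j := H.ord.symm.injective.ne hij.ne
  have hl : 2 ≤ (l : ℕ) := by
    have := Fin.val_ne_of_ne hij'
    omega
  rcases H.eq_par_of_adj_of_lt hl hik_adj hik with rfl | rfl <;>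
    rcases H.eq_par_of_adj_of_lt hl hjk_adj hjk with rfl | rfl
  · exact absurd rfl hij.ne
  · exact H.eqvGen_triGen_of_mem_triangleEdges_par p hl hcol he he'
  · rw [Set.insert_comm] at hcol
    rw [← triangleEdges_rotate, triangleEdges_swap] at he he'
    exact H.eqvGen_triGen_of_mem_triangleEdges_par p hl hcol he he'
  · exact absurd rfl hij.ne

lemma onCollinearTriangle_le_eqvGen_triGen (p : Conf ι) :
    OnCollinearTriangle G p ≤ EqvGen (triGen H p) := by
  rintro e e' ⟨i, j, k, h3, hcol, he, he'⟩
  obtain ⟨hij, hik, hjk⟩ := h3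
  have hne {a b : ι} (h : G.Adj a b) : H.ord.symm a ≠ H.ord.symm b :=
    H.ord.symm.injective.ne h.ne
  have latest : (H.ord.symm i < H.ord.symm k ∧ H.ord.symm j < H.ord.symm k) ∨
      (H.ord.symm i < H.ord.symm j ∧ H.ord.symm k < H.ord.symm j) ∨
      (H.ord.symm j < H.ord.symm i ∧ H.ord.symm k < H.ord.symm i) := by
    have := hne hij; have := hne hik; have := hne hjk
    omega
  rcases latest with ⟨h1, h2⟩ | ⟨h1, h2⟩ | ⟨h1, h2⟩
  · exact H.eqvGen_triGen_of_mem_triangleEdges_of_lt p ⟨hij, hik, hjk⟩ hcol h1 h2 he he'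
  · rw [Set.pair_comm] at hcol
    rw [← triangleEdges_swap] at he he'
    exact H.eqvGen_triGen_of_mem_triangleEdges_of_lt p ⟨hik, hij, hjk.symm⟩ hcol h1 h2 he he'
  · rw [Set.insert_comm, Set.pair_comm] at hcol
    rw [← triangleEdges_rotate] at he he'
    exact H.eqvGen_triGen_of_mem_triangleEdges_of_lt p ⟨hjk, hij.symm, hik.symm⟩ hcol h1 h2
      he he'

lemma triGen_le_onCollinearTriangle (p : Conf ι) : triGen H p ≤ OnCollinearTriangle G p := by
  rintro e e' ⟨l, hl, hcol, rfl, he⟩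
  refine ⟨_, _, _, ⟨H.par_adj l hl, ?_, ?_⟩, hcol, ?_, .inl rfl⟩
  · exact (H.edge_iff _ _).2 (.inr ⟨l, hl, .inl rfl⟩)
  · exact (H.edge_iff _ _).2 (.inr ⟨l, hl, .inr rfl⟩)
  · rcases he with rfl | rfl
    exacts [.inr (.inl rfl), .inr (.inr rfl)]

lemma eqvGen_triGen (p : Conf ι) : EqvGen (triGen H p) = EqvGen (OnCollinearTriangle G p) :=
  le_antisymm (EqvGen.mono (H.triGen_le_onCollinearTriangle p))
    (EqvGen.eqvGen_le (H.onCollinearTriangle_le_eqvGen_triGen p))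

lemma indepPartition_eq (p : Conf ι) : indepPartition H p =
    {C | ∃ e ∈ G.edgeSet,
      C = {e' | e' ∈ G.edgeSet ∧ EqvGen (OnCollinearTriangle G p) e e'}} := by
  rw [indepPartition, H.eqvGen_triGen]

end Henneberg

end

theorem stmt4_general {ι : Type*} (G : SimpleGraph ι)
    (p : Conf ι) (H1 H2 : Henneberg G) :
    indepPartition H1 p = indepPartition H2 p := by
  rw [H1.indepPartition_eq, H2.indepPartition_eq]

/-- Lemma 3.1 of the paper. For a framework `(G, p)` with `G` a
triangulated Laman graph, the independent partition of the edge set does not depend on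
the choice of the Henneberg sequence of `G`. -/
theorem stmt4 {ι : Type*} [Fintype ι] (G : SimpleGraph ι)
    (p : Conf ι) (hp : p ∈ configSpace G) (H1 H2 : Henneberg G) :
    indepPartition H1 p = indepPartition H2 p :=
  stmt4_general G p H1 H2
end

section
/- Let G = (V,E) and G' = (V',E') be triangulated Laman graphs, each with at least two vertices, such that G' is a subgraph of G. Then there exists a Henneberg sequence {G(l)}_{l=1}^{|V|} of G in which G' is a leading subgraph, i.e., G' = G(|V'|). -/
open scoped BigOperators

/-- The graph `G(k)` appearing at step `k` of a Henneberg sequence: its edges are the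
initial edge together with the edges created at the steps `2 ≤ l < k`. -/
def leadingGraph {ι : Type*} {G : SimpleGraph ι} (H : Henneberg G) (k : ℕ) :
    SimpleGraph ι :=
  SimpleGraph.fromEdgeSet
    {e | (2 ≤ k ∧ e = s(H.ord ⟨0, Nat.lt_of_lt_of_le (by norm_num) H.two_le⟩,
            H.ord ⟨1, Nat.lt_of_lt_of_le (by norm_num) H.two_le⟩)) ∨
      ∃ l : Fin (Nat.card ι), 2 ≤ (l : ℕ) ∧ (l : ℕ) < k ∧
        (e = s(H.ord (H.par1 l), H.ord l) ∨ e = s(H.ord (H.par2 l), H.ord l))}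


/-!
A Henneberg sequence of a triangulated Laman graph is an ear ordering of a 2-tree. Counting
edges along such an ordering, the vertex set `R` of a 2-tree spans exactly `2|R| - 3` edges
(it is *tight*), while every `T ⊆ R` with `|T| ≥ 2` spans at most `2|T| - 3` edges. Applied
to the support `S` of `G'`, tight for `G'` and sparse for `G ≥ G'`, this shows that `G` has no
edges inside `S` besides those of `G'`.

The heart of the proof: if `T ⊊ R` is tight inside a 2-tree on `R`, then some ear `u ∉ T` of
`R` can be removed, leaving a 2-tree. This goes by induction on the construction of `R`,
comparing `T` with the last ear `v` of `R` and its two neighbours. Removing such ears until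
only `S` is left and reading them backwards extends the Henneberg sequence of `G'` to one of
`G`.
-/

section

open Finset
open scoped Classical

variable {ι ι' : Type*} {n : ℕ}

namespace SimpleGraph

variable {G G' : SimpleGraph ι} {R T : Finset ι} {L : List ι} {a b u v w x y : ι}

noncomputable def edgesIn (G : SimpleGraph ι) (T : Finset ι) : Finset (Sym2 ι) :=
  {e ∈ T.sym2 | e ∈ G.edgeSet}

lemma edgesIn_singleton (G : SimpleGraph ι) (a : ι) : G.edgesIn {a} = ∅ := by
  simp [edgesIn, Finset.sym2_singleton]

lemma card_edgesIn_insert (hv : v ∉ T) :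
    #(G.edgesIn (insert v T)) = #(G.edgesIn T) + #{w ∈ T | G.Adj w v} := by
  have hdisj : Disjoint {e ∈ (insert v T).image (s(v, ·)) | e ∈ G.edgeSet}
      {e ∈ T.sym2 | e ∈ G.edgeSet} := by
    refine disjoint_filter_filter (Finset.disjoint_left.2 ?_)
    rintro _ he h
    obtain ⟨w, -, rfl⟩ := mem_image.1 he
    exact hv (mk_mem_sym2_iff.1 h).1
  have himage : {e ∈ (insert v T).image (s(v, ·)) | e ∈ G.edgeSet} =
      {w ∈ T | G.Adj w v}.image (s(v, ·)) := by
    ext e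
    simp only [mem_filter, mem_image, mem_insert]
    constructor
    · rintro ⟨⟨w, hw, rfl⟩, hadj⟩
      rcases hw with rfl | hw
      · exact absurd hadj G.irrefl
      · exact ⟨w, ⟨hw, G.adj_symm hadj⟩, rfl⟩
    · rintro ⟨w, ⟨hw, hadj⟩, rfl⟩
      exact ⟨⟨w, Or.inr hw, rfl⟩, hadj.symm⟩
  rw [edgesIn, sym2_insert, filter_union, card_union_of_disjoint hdisj, himage,
    card_image_of_injective _ fun _ _ => Sym2.congr_right.1, add_comm]
  rfl

lemma card_edgesIn_erase_add (hv : v ∈ T) :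
    #(G.edgesIn (T.erase v)) + #{w ∈ T.erase v | G.Adj w v} = #(G.edgesIn T) := by
  rw [← card_edgesIn_insert (notMem_erase v T), insert_erase hv]

lemma card_edgesIn_pair (hab : a ≠ b) :
    #(G.edgesIn {a, b}) = if G.Adj a b then 1 else 0 := by
  rw [card_edgesIn_insert (by simpa using hab), edgesIn_singleton, card_empty, zero_add,
    filter_singleton, G.adj_comm]
  split_ifs <;> rfl

lemma edgesIn_mono (h : G' ≤ G) : G'.edgesIn T ⊆ G.edgesIn T :=
  monotone_filter_right _ fun _ _ he => edgeSet_mono h he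

lemma adj_of_card_edgesIn_le (h : G' ≤ G) (hcard : #(G.edgesIn T) ≤ #(G'.edgesIn T))
    (hx : x ∈ T) (hy : y ∈ T) (hxy : G.Adj x y) : G'.Adj x y := by
  have hmem : s(x, y) ∈ G.edgesIn T := by simp [edgesIn, hx, hy, hxy]
  rw [← eq_of_subset_of_card_le (edgesIn_mono h) hcard] at hmem
  exact (mem_filter.1 hmem).2

def IsTight (G : SimpleGraph ι) (T : Finset ι) : Prop :=
  2 ≤ #T ∧ #(G.edgesIn T) = 2 * #T - 3

lemma isTight_pair (hab : G.Adj a b) : G.IsTight {a, b} := by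
  have hne := G.ne_of_adj hab
  refine ⟨by rw [card_pair hne], ?_⟩
  rw [card_edgesIn_pair hne, if_pos hab, card_pair hne]

def IsEar (G : SimpleGraph ι) (R : Finset ι) (v : ι) : Prop :=
  v ∉ R ∧ ∃ a b, a ≠ b ∧ G.Adj a b ∧ {w ∈ R | G.Adj w v} = {a, b}

inductive IsTwoTreeOn (G : SimpleGraph ι) : Finset ι → Prop
  | edge {a b : ι} : G.Adj a b → IsTwoTreeOn G {a, b}
  | ear {R : Finset ι} {v : ι} : IsTwoTreeOn G R → G.IsEar R v → IsTwoTreeOn G (insert v R)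

def IsRemovableEar (G : SimpleGraph ι) (R : Finset ι) (u : ι) : Prop :=
  G.IsEar (R.erase u) u ∧ G.IsTwoTreeOn (R.erase u)

namespace IsEar

lemma card_filter_adj_le (hv : G.IsEar R v) (hT : T ⊆ R) : #{w ∈ T | G.Adj w v} ≤ 2 := by
  obtain ⟨-, a, b, hab, -, hN⟩ := hv
  calc #{w ∈ T | G.Adj w v} ≤ #{w ∈ R | G.Adj w v} := card_le_card (filter_subset_filter _ hT)
    _ = 2 := by rw [hN, card_pair hab]

lemma card_edgesIn_insert (hv : G.IsEar R v) :
    #(G.edgesIn (insert v R)) = #(G.edgesIn R) + 2 := by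
  obtain ⟨hvR, a, b, hab, -, hN⟩ := hv
  rw [SimpleGraph.card_edgesIn_insert hvR, hN, card_pair hab]

lemma erase (hv : G.IsEar R v) (hu : ¬ G.Adj u v) : G.IsEar (R.erase u) v := by
  obtain ⟨hvR, a, b, hab, hadj, hN⟩ := hv
  refine ⟨fun h => hvR (mem_of_mem_erase h), a, b, hab, hadj, ?_⟩
  rw [filter_erase, erase_eq_of_notMem (by simp [hu]), hN]

lemma insert (hu : G.IsEar R u) (hvu : v ≠ u) (hv : ¬ G.Adj v u) :
    G.IsEar (insert v R) u := by
  obtain ⟨huR, a, b, hab, hadj, hN⟩ := hu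
  refine ⟨by simp [hvu.symm, huR], a, b, hab, hadj, ?_⟩
  rw [filter_insert, if_neg hv, hN]

end IsEar

lemma IsRemovableEar.insert (hu : G.IsRemovableEar R u) (hv : G.IsEar R v) (huR : u ∈ R)
    (huv : ¬ G.Adj u v) : G.IsRemovableEar (insert v R) u := by
  have hne : v ≠ u := fun h => hv.1 (h ▸ huR)
  rw [IsRemovableEar, erase_insert_of_ne hne]
  exact ⟨hu.1.insert hne fun h => huv h.symm, hu.2.ear (hv.erase huv)⟩

lemma isRemovableEar_triangle (hvw : G.Adj v w) (huv : G.Adj u v) (huw : G.Adj u w) :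
    G.IsRemovableEar {u, v, w} u := by
  have hu : u ∉ ({v, w} : Finset ι) := by simp [G.ne_of_adj huv, G.ne_of_adj huw]
  rw [IsRemovableEar, erase_insert hu]
  refine ⟨⟨hu, v, w, G.ne_of_adj hvw, hvw, filter_true_of_mem ?_⟩, .edge hvw⟩
  simp [huv.symm, huw.symm]

lemma exists_isRemovableEar_triangle (hab : G.Adj a b) (ha : G.Adj a v) (hb : G.Adj b v)
    (hw : w = a ∨ w = b) :
    ∃ u ∈ ({v, a, b} : Finset ι), u ∉ ({v, w} : Finset ι) ∧
      G.IsRemovableEar {v, a, b} u := by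
  rcases hw with rfl | rfl
  · refine ⟨b, by simp, by simp [G.ne_of_adj hb, G.ne_of_adj hab.symm], ?_⟩
    rw [show ({v, w, b} : Finset ι) = {b, v, w} by ext; simp; tauto]
    exact isRemovableEar_triangle ha.symm hb hab.symm
  · refine ⟨a, by simp, by simp [G.ne_of_adj ha, G.ne_of_adj hab], ?_⟩
    rw [show ({v, a, w} : Finset ι) = {a, v, w} by ext; simp; tauto]
    exact isRemovableEar_triangle hb.symm ha hab

namespace IsTwoTreeOn

lemma two_le_card (h : G.IsTwoTreeOn R) : 2 ≤ #R := by
  induction h with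
  | edge hab => rw [card_pair (G.ne_of_adj hab)]
  | ear _ hv ih => rw [card_insert_of_notMem hv.1]; omega

lemma isTight (h : G.IsTwoTreeOn R) : G.IsTight R := by
  refine ⟨h.two_le_card, ?_⟩
  induction h with
  | edge hab => exact (isTight_pair hab).2
  | ear hR hv ih =>
    have := hR.two_le_card
    rw [hv.card_edgesIn_insert, ih, card_insert_of_notMem hv.1]
    omega

lemma card_edgesIn_le (h : G.IsTwoTreeOn R) (hTR : T ⊆ R) (hT : 2 ≤ #T) :
    #(G.edgesIn T) ≤ 2 * #T - 3 := by
  induction h generalizing T with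
  | @edge a b hab =>
    have hne := G.ne_of_adj hab
    obtain rfl : T = {a, b} := eq_of_subset_of_card_le hTR (by rwa [card_pair hne])
    rw [card_edgesIn_pair hne, if_pos hab, card_pair hne]
  | @ear R v hR hv ih =>
    by_cases hvT : v ∈ T
    · have hsplit := card_edgesIn_erase_add (G := G) hvT
      have hdeg := hv.card_filter_adj_le (subset_insert_iff.1 hTR)
      have hcard := card_erase_of_mem hvT
      rcases le_or_gt 2 #(T.erase v) with h2 | h1
      · have := ih (subset_insert_iff.1 hTR) h2
        omega
      · obtain ⟨w, hw⟩ := card_eq_one.1 (by omega : #(T.erase v) = 1)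
        rw [hw, edgesIn_singleton, card_empty] at hsplit
        have : #{x ∈ ({w} : Finset ι) | G.Adj x v} ≤ 1 := (card_filter_le _ _).trans (by simp)
        omega
    · exact ih ((subset_insert_iff_of_notMem hvT).1 hTR) hT

end IsTwoTreeOn

lemma IsEar.isTight_erase_or (hR : G.IsTwoTreeOn R) (hv : G.IsEar R v) (hvT : v ∈ T)
    (hTR : T.erase v ⊆ R) (hT : G.IsTight T) :
    (G.IsTight (T.erase v) ∧ {w ∈ R | G.Adj w v} ⊆ T.erase v) ∨
      ∃ w, T = {v, w} ∧ G.Adj w v := by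
  obtain ⟨hcard, hcount⟩ := hT
  have hsplit := card_edgesIn_erase_add (G := G) hvT
  have hcard' := card_erase_of_mem hvT
  have hdeg := hv.card_filter_adj_le hTR
  rcases le_or_gt 2 #(T.erase v) with h2 | h1
  · have hsparse := hR.card_edgesIn_le hTR h2
    have hdeg2 : #{w ∈ T.erase v | G.Adj w v} = 2 := by omega
    refine Or.inl ⟨⟨h2, by omega⟩, ?_⟩
    have : {w ∈ T.erase v | G.Adj w v} = {w ∈ R | G.Adj w v} :=
      eq_of_subset_of_card_le (filter_subset_filter _ hTR)
        (by rw [hdeg2]; exact hv.card_filter_adj_le subset_rfl)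
    exact this ▸ filter_subset _ _
  · obtain ⟨w, hw⟩ := card_eq_one.1 (by omega : #(T.erase v) = 1)
    have hTcard : #T = 2 := by omega
    rw [hw, edgesIn_singleton, card_empty, filter_singleton] at hsplit
    rw [← hsplit, hTcard] at hcount
    refine Or.inr ⟨w, by rw [← insert_erase hvT, hw], ?_⟩
    split_ifs at hcount with h
    · exact h
    · simp at hcount

lemma IsTwoTreeOn.adj_of_le (hR : G.IsTwoTreeOn R) (hT : G'.IsTwoTreeOn T) (hTR : T ⊆ R)
    (hle : G' ≤ G) (hx : x ∈ T) (hy : y ∈ T) (hxy : G.Adj x y) : G'.Adj x y :=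
  adj_of_card_edgesIn_le hle (by rw [hT.isTight.2]; exact hR.card_edgesIn_le hTR hT.two_le_card)
    hx hy hxy

theorem IsTwoTreeOn.exists_isRemovableEar (hR : G.IsTwoTreeOn R) (hT : G.IsTight T)
    (hTR : T ⊂ R) : ∃ u ∈ R, u ∉ T ∧ G.IsRemovableEar R u := by
  induction hR generalizing T with
  | @edge a b hab =>
    have := card_lt_card hTR
    rw [card_pair (G.ne_of_adj hab)] at this
    exact absurd hT.1 (by omega)
  | @ear R v hR hv ih =>
    by_cases hvT : v ∈ T
    swap
    · refine ⟨v, mem_insert_self v R, hvT, ?_⟩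
      rw [IsRemovableEar, erase_insert hv.1]
      exact ⟨hv, hR⟩
    obtain ⟨hvR, a, b, hab, hadj, hN⟩ := id hv
    -- an ear of `R` outside a tight `S ⊇ N(v)` is not adjacent to `v`, so it stays removable
    have recurse : ∀ S, G.IsTight S → S ⊂ R → {w ∈ R | G.Adj w v} ⊆ S →
        T ⊆ insert v S → ∃ u ∈ insert v R, u ∉ T ∧ G.IsRemovableEar (insert v R) u := by
      intro S hS hSR hNS hTS
      obtain ⟨u, huR, huS, hu⟩ := ih hS hSR
      have huv : ¬ G.Adj u v := fun h => huS (hNS (mem_filter.2 ⟨huR, h⟩))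
      refine ⟨u, mem_insert_of_mem huR, fun huT => ?_, hu.insert hv huR huv⟩
      rcases mem_insert.1 (hTS huT) with rfl | h
      exacts [hvR huR, huS h]
    have hT' : T.erase v ⊆ R := subset_insert_iff.1 hTR.subset
    rcases hv.isTight_erase_or hR hvT hT' hT with ⟨hT'tight, hNT'⟩ | ⟨w, hTvw, hwv⟩
    · refine recurse _ hT'tight (Finset.ssubset_iff_subset_ne.2 ⟨hT', fun h => hTR.ne ?_⟩) hNT'
        (insert_erase hvT).symm.subset
      rw [← insert_erase hvT, h]
    have hwab : w ∈ ({a, b} : Finset ι) :=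
      hN ▸ mem_filter.2 ⟨hT' (by simp [hTvw, G.ne_of_adj hwv]), hwv⟩
    by_cases habR : {a, b} = R
    · subst habR hTvw
      have hNv : ∀ x ∈ ({a, b} : Finset ι), G.Adj x v := fun x hx =>
        (mem_filter.1 (show x ∈ {w ∈ ({a, b} : Finset ι) | G.Adj w v} by rwa [hN])).2
      exact exists_isRemovableEar_triangle hadj (hNv a (by simp)) (hNv b (by simp))
        (by simpa using hwab)
    · refine recurse _ (isTight_pair hadj) (Finset.ssubset_iff_subset_ne.2 ⟨?_, habR⟩) hN.le ?_
      · exact hN ▸ filter_subset _ _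
      · rw [hTvw]
        exact insert_subset_insert v (singleton_subset_iff.2 hwab)

inductive IsEarList (G : SimpleGraph ι) : List ι → Prop
  | edge {a b : ι} : G.Adj a b → IsEarList G [a, b]
  | ear {L : List ι} {v : ι} : IsEarList G L → G.IsEar L.toFinset v → IsEarList G (L ++ [v])

namespace IsEarList

lemma isTwoTreeOn (h : G.IsEarList L) : G.IsTwoTreeOn L.toFinset := by
  induction h with
  | edge hab => simpa using IsTwoTreeOn.edge hab
  | ear _ hv ih => simpa using ih.ear hv

lemma nodup (h : G.IsEarList L) : L.Nodup := by
  induction h with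
  | edge hab => simp [G.ne_of_adj hab]
  | ear _ hv ih => exact ih.append (List.nodup_singleton _) (by simpa using hv.1)

lemma two_le_length (h : G.IsEarList L) : 2 ≤ L.length :=
  h.isTwoTreeOn.two_le_card.trans (List.toFinset_card_le L)

lemma map {G' : SimpleGraph ι'} (h : G.IsEarList L) (f : G ↪g G') : G'.IsEarList (L.map f) := by
  induction h with
  | edge hab => exact .edge (f.map_adj_iff.2 hab)
  | @ear L v _ hv ih =>
    obtain ⟨hvL, a, b, hab, hadj, hN⟩ := hv
    rw [List.map_append, List.map_singleton]
    refine ih.ear ⟨by simpa using hvL, f a, f b, f.injective.ne hab, f.map_adj_iff.2 hadj, ?_⟩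
    have himage : (L.map f).toFinset = L.toFinset.image f := by ext; simp
    simp_rw [himage, filter_image, f.map_adj_iff, hN, image_insert, image_singleton]

lemma adj_getElem_zero_one (h : G.IsEarList L) (hL : 1 < L.length) : G.Adj L[0] L[1] := by
  induction h with
  | edge hab => exact hab
  | @ear L v hL' _ ih =>
    have := hL'.two_le_length
    rw [List.getElem_append_left, List.getElem_append_left]
    exact ih (by omega)

lemma isEar_take (h : G.IsEarList L) {l : ℕ} (hl : 2 ≤ l) (hlL : l < L.length) :
    G.IsEar (L.take l).toFinset L[l] := by
  induction h with
  | edge hab => simp at hlL; omega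
  | @ear L v hL hv ih =>
    rcases (Nat.lt_succ_iff_lt_or_eq.1 (by simpa using hlL) : l < L.length ∨ l = L.length)
      with hlt | rfl
    · rw [List.take_append_of_le_length hlt.le, List.getElem_append_left hlt]
      exact ih hlt
    · rw [List.take_left' rfl, List.getElem_concat_length rfl]
      exact hv

lemma of_isEar_take (hL : 1 < L.length) (h01 : G.Adj L[0] L[1])
    (h : ∀ l (hlL : l < L.length), 2 ≤ l → G.IsEar (L.take l).toFinset L[l]) :
    G.IsEarList L := by
  suffices ∀ m, 2 ≤ m → m ≤ L.length → G.IsEarList (L.take m) by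
    simpa using this L.length hL le_rfl
  intro m hm
  induction m, hm using Nat.le_induction with
  | base =>
    intro _
    match L, hL, h01 with
    | a :: b :: _, _, h01 => exact .edge h01
  | succ m hm ih =>
    intro hmL
    rw [← List.take_concat_get' L m hmL]
    exact (ih (by omega)).ear (h m hmL hm)

end IsEarList

theorem IsTwoTreeOn.exists_isEarList_append (hR : G.IsTwoTreeOn R) (hL : G.IsEarList L)
    (hLR : L.toFinset ⊆ R) : ∃ L', G.IsEarList (L ++ L') ∧ (L ++ L').toFinset = R := by
  induction R using Finset.strongInduction with
  | H R ih =>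
  by_cases hLR' : L.toFinset = R
  · exact ⟨[], by simpa using hL, by simpa using hLR'⟩
  obtain ⟨u, huR, huL, hear, htree⟩ :=
    hR.exists_isRemovableEar hL.isTwoTreeOn.isTight (Finset.ssubset_iff_subset_ne.2 ⟨hLR, hLR'⟩)
  obtain ⟨L', hL', hL'R⟩ := ih _ (erase_ssubset huR) htree
    (fun x hx => mem_erase.2 ⟨ne_of_mem_of_not_mem hx huL, hLR hx⟩)
  refine ⟨L' ++ [u], ?_, ?_⟩
  · rw [← List.append_assoc]
    exact hL'.ear (hL'R ▸ hear)
  · rw [← List.append_assoc, List.toFinset_append, hL'R]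
    simp [insert_erase huR]

end SimpleGraph

lemma Equiv.mem_ofFn (e : Fin n ≃ ι) (x : ι) : x ∈ List.ofFn e :=
  List.mem_ofFn.2 ⟨e.symm x, e.apply_symm_apply x⟩

lemma Equiv.mem_take_ofFn_iff (e : Fin n ≃ ι) {k : ℕ} {x : ι} :
    x ∈ (List.ofFn e).take k ↔ (e.symm x : ℕ) < k := by
  rw [List.mem_take_iff_getElem]
  constructor
  · rintro ⟨j, hj, rfl⟩
    simp only [List.getElem_ofFn, Equiv.symm_apply_apply]
    omega
  · intro hx
    exact ⟨e.symm x, by simp; omega, by simp⟩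

lemma List.Nodup.exists_equiv_ofFn_eq {L : List ι} (hnd : L.Nodup) (hL : ∀ x, x ∈ L) :
    ∃ e : Fin (Nat.card ι) ≃ ι, List.ofFn e = L := by
  let e := hnd.getEquivOfForallMemList L hL
  have hcard : Nat.card ι = L.length := Nat.card_eq_of_equiv_fin e.symm
  refine ⟨(finCongr hcard).trans e, List.ext_getElem (by simp [hcard]) fun i _ _ => ?_⟩
  simp [e]

namespace SimpleGraph

variable {G : SimpleGraph ι}

def IsParentPair (G : SimpleGraph ι) (e : Fin n → ι) (l p q : Fin n) : Prop :=
  p < l ∧ q < l ∧ p ≠ q ∧ G.Adj (e p) (e q) ∧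
    ∀ j < l, G.Adj (e j) (e l) ↔ j = p ∨ j = q

lemma isEar_take_ofFn_iff (e : Fin n ≃ ι) (l : Fin n) :
    G.IsEar ((List.ofFn e).take l).toFinset (e l) ↔ ∃ p q, G.IsParentPair e l p q := by
  have hmem : ∀ x, x ∈ ((List.ofFn e).take l).toFinset ↔ e.symm x < l := fun x => by
    rw [List.mem_toFinset, e.mem_take_ofFn_iff]
    rfl
  constructor
  · rintro ⟨-, a, b, hab, hadj, hN⟩
    have hN' : ∀ x, (e.symm x < l ∧ G.Adj x (e l)) ↔ x = a ∨ x = b := fun x => by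
      simpa [hmem] using congrArg (x ∈ ·) hN
    refine ⟨e.symm a, e.symm b, ((hN' a).2 (Or.inl rfl)).1, ((hN' b).2 (Or.inr rfl)).1,
      by simpa using hab, by simpa using hadj, fun j hj => ?_⟩
    rw [e.eq_symm_apply, e.eq_symm_apply, ← hN']
    simp [hj]
  · rintro ⟨p, q, hp, hq, hpq, hadj, hpar⟩
    refine ⟨by simp [hmem], e p, e q, by simpa using hpq, hadj, ?_⟩
    ext x
    obtain ⟨j, rfl⟩ := e.surjective x
    simp only [mem_filter, hmem, Equiv.symm_apply_apply, mem_insert, mem_singleton,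
      EmbeddingLike.apply_eq_iff_eq]
    constructor
    · rintro ⟨hj, h⟩
      exact (hpar j hj).1 h
    · rintro (rfl | rfl)
      exacts [⟨hp, (hpar _ hp).2 (Or.inl rfl)⟩, ⟨hq, (hpar _ hq).2 (Or.inr rfl)⟩]

end SimpleGraph

namespace Henneberg

variable {G : SimpleGraph ι} (H : Henneberg G)

lemma isParentPair (l : Fin (Nat.card ι)) (hl : 2 ≤ (l : ℕ)) :
    G.IsParentPair H.ord l (H.par1 l) (H.par2 l) := by
  refine ⟨H.par1_lt l hl, H.par2_lt l hl, H.par_ne l hl, H.par_adj l hl, fun j hj => ?_⟩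
  rw [H.edge_iff]
  simp only [Sym2.eq_iff, EmbeddingLike.apply_eq_iff_eq]
  constructor
  · rintro ((⟨rfl, rfl⟩ | ⟨rfl, rfl⟩) |
      ⟨l', hl', (⟨rfl, rfl⟩ | ⟨rfl, rfl⟩) | (⟨rfl, rfl⟩ | ⟨rfl, rfl⟩)⟩)
    · simp at hl
    · simp at hl
    · exact Or.inl rfl
    · exact absurd (H.par1_lt j hl') hj.asymm
    · exact Or.inr rfl
    · exact absurd (H.par2_lt j hl') hj.asymm
  · rintro (rfl | rfl)
    exacts [Or.inr ⟨l, hl, Or.inl (Or.inl ⟨rfl, rfl⟩)⟩,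
      Or.inr ⟨l, hl, Or.inr (Or.inl ⟨rfl, rfl⟩)⟩]

lemma isEarList : G.IsEarList (List.ofFn H.ord) := by
  have h2 := H.two_le
  refine .of_isEar_take (by simp; omega) ?_ fun l hl hl2 => ?_
  · simpa using (H.edge_iff _ _).2 (Or.inl rfl)
  · simpa using (SimpleGraph.isEar_take_ofFn_iff H.ord ⟨l, by simpa using hl⟩).2
      ⟨_, _, H.isParentPair _ hl2⟩

lemma exists_ord_eq (e : Fin (Nat.card ι) ≃ ι) (h : G.IsEarList (List.ofFn e)) :
    ∃ H : Henneberg G, H.ord = e := by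
  have h2 : 2 ≤ Nat.card ι := by simpa using h.two_le_length
  have hpar : ∀ l : Fin (Nat.card ι), ∃ p q, 2 ≤ (l : ℕ) → G.IsParentPair e l p q := by
    intro l
    by_cases hl : 2 ≤ (l : ℕ)
    · obtain ⟨p, q, hpq⟩ :=
        (SimpleGraph.isEar_take_ofFn_iff e l).1 (by simpa using h.isEar_take hl (by simp))
      exact ⟨p, q, fun _ => hpq⟩
    · exact ⟨l, l, fun h => absurd h hl⟩
  choose p q hpq using hpar
  have h01 : G.Adj (e ⟨0, by omega⟩) (e ⟨1, by omega⟩) := by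
    have := h.adj_getElem_zero_one (by simp; omega)
    rwa [List.getElem_ofFn, List.getElem_ofFn] at this
  have hedge : ∀ a b, a < b → G.Adj (e a) (e b) →
      s(e a, e b) = s(e ⟨0, by omega⟩, e ⟨1, by omega⟩) ∨
        ∃ l : Fin (Nat.card ι), 2 ≤ (l : ℕ) ∧
          (s(e a, e b) = s(e (p l), e l) ∨ s(e a, e b) = s(e (q l), e l)) := by
    intro a b hab hadj
    by_cases hb : 2 ≤ (b : ℕ)
    · rcases ((hpq b hb).2.2.2.2 a hab).1 hadj with rfl | rfl
      exacts [Or.inr ⟨b, hb, Or.inl rfl⟩, Or.inr ⟨b, hb, Or.inr rfl⟩]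
    · rw [Fin.lt_def] at hab
      have ha : a = ⟨0, by omega⟩ := Fin.ext (by simp; omega)
      have hb : b = ⟨1, by omega⟩ := Fin.ext (by simp; omega)
      exact Or.inl (by rw [ha, hb])
  refine ⟨{ two_le := h2, ord := e, par1 := p, par2 := q
            par1_lt := fun l hl => (hpq l hl).1
            par2_lt := fun l hl => (hpq l hl).2.1
            par_ne := fun l hl => (hpq l hl).2.2.1
            par_adj := fun l hl => (hpq l hl).2.2.2.1
            edge_iff := fun x y => ?_ }, rfl⟩
  obtain ⟨a, rfl⟩ := e.surjective x
  obtain ⟨b, rfl⟩ := e.surjective y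
  constructor
  · intro hadj
    rcases lt_trichotomy a b with hab | rfl | hab
    · exact hedge a b hab hadj
    · exact absurd hadj (G.irrefl)
    · rw [Sym2.eq_swap]
      exact hedge b a hab hadj.symm
  · rintro (h | ⟨l, hl, h | h⟩) <;> rw [← G.mem_edgeSet, h, G.mem_edgeSet]
    · exact h01
    · exact ((hpq l hl).2.2.2.2 _ (hpq l hl).1).2 (Or.inl rfl)
    · exact ((hpq l hl).2.2.2.2 _ (hpq l hl).2.1).2 (Or.inr rfl)

lemma leadingGraph_adj (k : ℕ) {x y : ι} :
    (leadingGraph H k).Adj x y ↔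
      G.Adj x y ∧ (H.ord.symm x : ℕ) < k ∧ (H.ord.symm y : ℕ) < k := by
  have hlt : ∀ {a b c d}, s(H.ord a, H.ord b) = s(H.ord c, H.ord d) →
      ((a : ℕ) < k ∧ (b : ℕ) < k ↔ (c : ℕ) < k ∧ (d : ℕ) < k) := by
    intro a b c d h
    simp only [Sym2.eq_iff, EmbeddingLike.apply_eq_iff_eq] at h
    rcases h with ⟨rfl, rfl⟩ | ⟨rfl, rfl⟩ <;> tauto
  obtain ⟨a, rfl⟩ := H.ord.surjective x
  obtain ⟨b, rfl⟩ := H.ord.surjective y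
  rw [leadingGraph, SimpleGraph.fromEdgeSet_adj, Set.mem_ofPred_eq, H.edge_iff]
  simp only [Equiv.symm_apply_apply]
  constructor
  · rintro ⟨⟨hk, h⟩ | ⟨l, hl, hlk, h | h⟩, -⟩
    · exact ⟨Or.inl h, (hlt h).2 ⟨by simp; omega, by simp; omega⟩⟩
    · exact ⟨Or.inr ⟨l, hl, Or.inl h⟩,
        (hlt h).2 ⟨(Fin.lt_def.1 (H.par1_lt l hl)).trans hlk, hlk⟩⟩
    · exact ⟨Or.inr ⟨l, hl, Or.inr h⟩,
        (hlt h).2 ⟨(Fin.lt_def.1 (H.par2_lt l hl)).trans hlk, hlk⟩⟩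
  · rintro ⟨hedge, hab⟩
    refine ⟨?_, G.ne_of_adj ((H.edge_iff _ _).2 hedge)⟩
    rcases hedge with h | ⟨l, hl, h | h⟩
    · exact Or.inl ⟨((hlt h).1 hab).2, h⟩
    · exact Or.inr ⟨l, hl, ((hlt h).1 hab).2, Or.inl h⟩
    · exact Or.inr ⟨l, hl, ((hlt h).1 hab).2, Or.inr h⟩

end Henneberg

end

theorem stmt9_general {ι : Type*} (G G' : SimpleGraph ι)
    (hG : IsTriangulatedLaman G) (hGcard : 2 ≤ Nat.card ι)
    (hsub : G' ≤ G) (hG' : IsTriangulatedLaman (G'.induce G'.support))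
    (hG'card : 2 ≤ Nat.card ↥G'.support) :
    ∃ H : Henneberg G, leadingGraph H (Nat.card ↥G'.support) = G' := by
  classical
  obtain ⟨H⟩ := hG.resolve_left (by omega)
  obtain ⟨H'⟩ := hG'.resolve_left (by omega)
  set S : List ι := (List.ofFn H'.ord).map Subtype.val
  have hmem : ∀ x, x ∈ S ↔ x ∈ G'.support := fun x =>
    ⟨fun hx => by obtain ⟨y, -, rfl⟩ := List.mem_map.1 hx; exact y.2,
      fun hx => List.mem_map.2 ⟨⟨x, hx⟩, H'.ord.mem_ofFn _, rfl⟩⟩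
  have hagree : ∀ x ∈ S, ∀ y ∈ S, G.Adj x y → G'.Adj x y := fun x hx y hy =>
    H.isEarList.isTwoTreeOn.adj_of_le
      (H'.isEarList.map (SimpleGraph.Embedding.induce _)).isTwoTreeOn
      (fun z _ => List.mem_toFinset.2 (H.ord.mem_ofFn z)) hsub
      (List.mem_toFinset.2 hx) (List.mem_toFinset.2 hy)
  have hind : G'.induce G'.support = G.induce G'.support := by
    ext ⟨x, hx⟩ ⟨y, hy⟩
    exact ⟨fun h => hsub h, hagree x ((hmem x).2 hx) y ((hmem y).2 hy)⟩
  have hS : G.IsEarList S :=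
    (show (G.induce G'.support).IsEarList (List.ofFn H'.ord) from hind ▸ H'.isEarList).map
      (SimpleGraph.Embedding.induce _)
  obtain ⟨L, hL, hLR⟩ := H.isEarList.isTwoTreeOn.exists_isEarList_append hS
    (fun x _ => List.mem_toFinset.2 (H.ord.mem_ofFn x))
  obtain ⟨e, he⟩ := hL.nodup.exists_equiv_ofFn_eq fun x => by
    rw [← List.mem_toFinset, hLR, List.mem_toFinset]
    exact H.ord.mem_ofFn x
  obtain ⟨H₀, rfl⟩ := Henneberg.exists_ord_eq e (he ▸ hL)
  refine ⟨H₀, ?_⟩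
  ext x y
  rw [Henneberg.leadingGraph_adj, ← Equiv.mem_take_ofFn_iff, ← Equiv.mem_take_ofFn_iff, he,
    List.take_left' (by simp [S])]
  exact ⟨fun ⟨h, hx, hy⟩ => hagree x hx y hy h,
    fun h => ⟨hsub h, (hmem x).2 ⟨y, h⟩, (hmem y).2 ⟨x, h.symm⟩⟩⟩

/-- Lemma 3.5 of the paper. If `G` and `G'` are triangulated Laman
graphs with at least two vertices and `G'` is a subgraph of `G`, then there is a Henneberg
sequence of `G` in which `G'` is a leading subgraph, i.e. `G' = G(|V'|)` where `V'` is the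
vertex set (= support) of `G'`. -/
theorem stmt9 {ι : Type*} [Fintype ι] (G G' : SimpleGraph ι)
    (hG : IsTriangulatedLaman G) (hGcard : 2 ≤ Nat.card ι)
    (hsub : G' ≤ G) (hG' : IsTriangulatedLaman (G'.induce G'.support))
    (hG'card : 2 ≤ Nat.card ↥G'.support) :
    ∃ H : Henneberg G, leadingGraph H (Nat.card ↥G'.support) = G' :=
  stmt9_general G G' hG hGcard hsub hG' hG'card
end
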